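/- There do not exist five consecutive non-negative terms in the infinity series: for all n, at least one of s(n), s(n+1), s(n+2), s(n+3), s(n+4) is negative. -/
import Mathlib


def s : ℕ → ℤ
  | 0 => 0
  | n + 1 =>
    if (n + 1) % 2 = 0 then -s ((n + 1) / 2)
    else s (n / 2) + 1
decreasing_by all_goals omega

lemma s_even (k : ℕ) : s (2 * k) = -s k := by
  cases k with
  | zero => simp [s]
  | succ m =>
    have h : 2 * (m + 1) = (2 * m + 1) + 1 := by ring
    rw [h, s]
    have h1 : (2 * m + 1 + 1) % 2 = 0 := by omega
    have h2 : (2 * m + 1 + 1) / 2 = m + 1 := by omega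
    simp [h1, h2]

lemma s_odd (k : ℕ) : s (2 * k + 1) = s k + 1 := by
  rw [s]
  have h1 : (2 * k + 1) % 2 = 1 := by omega
  have h2 : (2 * k) / 2 = k := by omega
  simp [h1, h2]

lemma key (i : ℕ) : ∀ t : ℕ, ¬ (-(t : ℤ) - 2 ≤ s i ∧ s i ≤ -(t : ℤ) - 1 ∧
    (if t % 2 = 0 then (0 : ℤ) else -1) ≤ s (i + 1) ∧
    s (i + 1) ≤ (if t % 2 = 0 then (1 : ℤ) else 0)) := by
  induction i using Nat.strong_induction_on with
  | _ i ih =>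
    rintro t ⟨h1, h2, h3, h4⟩
    rcases Nat.even_or_odd i with ⟨m, hm⟩ | ⟨m, hm⟩
    · have hi : i = 2 * m := by omega
      subst hi
      rw [s_even] at h1 h2
      have hodd : 2 * m + 1 = 2 * m + 1 := rfl
      rw [s_odd] at h3 h4
      split_ifs at h3 h4 <;> omega
    · have hi : i = 2 * m + 1 := by omega
      subst hi
      rw [s_odd] at h1 h2
      have h5 : 2 * m + 1 + 1 = 2 * (m + 1) := by ring
      rw [h5, s_even] at h3 h4
      have := ih m (by omega) (t + 1)
      apply this
      refine ⟨by push_cast; omega, by push_cast; omega, ?_, ?_⟩ <;>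
        · split_ifs with h <;> split_ifs at h3 h4 <;> omega

theorem stmt13 (n : ℕ) : ∃ i ≤ 4, s (n + i) < 0 := by
  by_contra h
  push_neg at h
  have h0 := h 0 (by omega)
  have h1 := h 1 (by omega)
  have h2 := h 2 (by omega)
  have h3 := h 3 (by omega)
  have h4 := h 4 (by omega)
  rcases Nat.even_or_odd n with ⟨k, hk⟩ | ⟨k, hk⟩
  · have hn : n = 2 * k := by omega
    subst hn
    rw [show 2 * k + 0 = 2 * k by ring, s_even] at h0
    rw [s_odd] at h1
    rw [show 2 * k + 2 = 2 * (k + 1) by ring, s_even] at h2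
    rw [show 2 * k + 3 = 2 * (k + 1) + 1 by ring, s_odd] at h3
    rw [show 2 * k + 4 = 2 * (k + 2) by ring, s_even] at h4
    -- s k ∈ [-1,0], s (k+1) ∈ [-1,0], s (k+2) ≤ 0
    rcases Nat.even_or_odd k with ⟨m, hm⟩ | ⟨m, hm⟩
    · have hk2 : k = 2 * m := by omega
      subst hk2
      rw [s_even] at h0 h1
      rw [show 2 * m + 1 = 2 * m + 1 by rfl, s_odd] at h2
      omega
    · have hk2 : k = 2 * m + 1 := by omega
      subst hk2
      rw [s_odd] at h0 h1
      rw [show 2 * m + 1 + 1 = 2 * (m + 1) by ring, s_even] at h2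
      rw [show 2 * m + 1 + 2 = 2 * (m + 1) + 1 by ring, s_odd] at h4
      omega
  · have hn : n = 2 * k + 1 := by omega
    subst hn
    rw [show 2 * k + 1 + 0 = 2 * k + 1 by ring, s_odd] at h0
    rw [show 2 * k + 1 + 1 = 2 * (k + 1) by ring, s_even] at h1
    rw [show 2 * k + 1 + 2 = 2 * (k + 1) + 1 by ring, s_odd] at h2
    rw [show 2 * k + 1 + 3 = 2 * (k + 2) by ring, s_even] at h3
    rw [show 2 * k + 1 + 4 = 2 * (k + 2) + 1 by ring, s_odd] at h4
    -- s k ≥ -1, s (k+1) ∈ [-1,0], s (k+2) ∈ [-1,0]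
    rcases Nat.even_or_odd (k + 1) with ⟨m, hm⟩ | ⟨m, hm⟩
    · have hk2 : k + 1 = 2 * m := by omega
      rw [hk2, s_even] at h1 h2
      rw [show k + 2 = 2 * m + 1 by omega, s_odd] at h3
      omega
    · have hk2 : k = 2 * m := by omega
      subst hk2
      rw [s_even] at h0
      rw [s_odd] at h1 h2
      rw [show 2 * m + 2 = 2 * (m + 1) by ring, s_even] at h3 h4
      have := key m 0
      simp only [Nat.zero_mod, if_pos rfl] at this
      apply this
      push_cast
      refine ⟨by omega, by omega, by omega, by omega⟩
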